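/- arXiv:1207.3230 — 2 statements merged into one kernel-verified Lean document; each statement's English description precedes it below -/
import Mathlib

section
/- Let g ≥ 3, let a be an admissible canonical parameter system of genus g, and let l ≥ 1. If v ∈ V_{g,l}(a) satisfies F_l^a(v) = 0, then v lies in the subspace W spanned by the elements s_I ⊗ s_j with I = (i_1 < ⋯ < i_l), j ∉ I and j > i_1. Consequently, the restriction of F_l^a to V_{g,l}(a) is injective if and only if the restriction of F_l^a to W is injective. -/
open Polynomial TensorProduct

set_option synthInstance.maxHeartbeats 1000000
set_option maxHeartbeats 1000000

noncomputable section

/-- Pairs of polynomials: restrictions of sections to the two rational components. -/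
abbrev PP : Type := Polynomial ℂ × Polynomial ℂ

/-- A subset of `ℂ^σ` is Zariski open if it is the complement of the common zero locus
of a set of polynomials. -/
def IsZariskiOpen {σ : Type} (U : Set (σ → ℂ)) : Prop :=
  ∃ S : Set (MvPolynomial σ ℂ), U = {x | ∃ p ∈ S, MvPolynomial.eval x p ≠ 0}

/-- Remove the `m`-th entry of a tuple. -/
def removeIdx {α : Type*} {l : ℕ} (m : Fin l) (v : Fin l → α) (j : Fin (l - 1)) : α :=
  if h : (j : ℕ) < (m : ℕ) then v ⟨j, by have := m.2; omega⟩
  else v ⟨(j : ℕ) + 1, by have := j.2; have := m.2; omega⟩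

/-- The generator `v 0 ∧ ⋯ ∧ v (n-1)` of the `n`-th exterior power. -/
def wedgeP (R : Type*) [CommRing R] {M : Type*} [AddCommGroup M] [Module R M]
    (n : ℕ) (v : Fin n → M) : ⋀[R]^n M :=
  ⟨ExteriorAlgebra.ιMulti R n v, ExteriorAlgebra.ιMulti_range R n (Set.mem_range_self v)⟩

/-- Componentwise multiplication by a fixed pair of polynomials, as a `ℂ`-linear map. -/
def mulPair (q : PP) : PP →ₗ[ℂ] PP := LinearMap.mulLeft ℂ q

section Prym

variable (g : ℕ)

/-- `M_j(t) = ∏_{r=1}^{g-1} (t - a_{r,j})`. -/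
def prymM (a : Fin (g - 1) × Fin 2 → ℂ) (j : Fin 2) : Polynomial ℂ :=
  ∏ r : Fin (g - 1), (X - C (a (r, j)))

/-- `A_j = ∏_{i=1}^{g-1} a_{i,j}`. -/
def prymA (a : Fin (g - 1) × Fin 2 → ℂ) (j : Fin 2) : ℂ :=
  ∏ r : Fin (g - 1), a (r, j)

/-- `d_1 = -A_1/A_2`, `d_2 = 1`. -/
def prymD (a : Fin (g - 1) × Fin 2 → ℂ) (j : Fin 2) : ℂ :=
  if j = 0 then -(prymA g a 0) / (prymA g a 1) else 1

/-- The polynomial `p_{i,j}`: `t·M_j(t)/(t - a_{i,j})` for `i ≤ k = ⌊g/2⌋` (`1`-based) and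
`-d_j·a_{i,j}·M_j(t)/(A_j (t - a_{i,j}))` for `i ≥ k+1` (all indices `0`-based in Lean). -/
def prymPoly (a : Fin (g - 1) × Fin 2 → ℂ) (i : Fin (g - 1)) (j : Fin 2) : Polynomial ℂ :=
  if (i : ℕ) < g / 2 then
    X * ∏ r ∈ Finset.univ.erase i, (X - C (a (r, j)))
  else
    C (-(prymD g a j) * a (i, j) / prymA g a j) * ∏ r ∈ Finset.univ.erase i, (X - C (a (r, j)))

/-- The Prym-canonical section `t_i = (p_{i,1}, p_{i,2})`. -/
def prymSection (a : Fin (g - 1) × Fin 2 → ℂ) (i : Fin (g - 1)) : PP :=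
  (prymPoly g a i 0, prymPoly g a i 1)

/-- The canonical sections `s_1, …, s_g`:
`s_j = (t·M_1/(t - a_{j,1}), -t·M_2/(t - a_{j,2}))` for `j ≤ g-1` and `s_g = (M_1, -M_2)`. -/
def prymCanSection (a : Fin (g - 1) × Fin 2 → ℂ) (j : Fin g) : PP :=
  if h : (j : ℕ) < g - 1 then
    (X * ∏ r ∈ Finset.univ.erase (⟨j, h⟩ : Fin (g - 1)), (X - C (a (r, 0))),
     -(X * ∏ r ∈ Finset.univ.erase (⟨j, h⟩ : Fin (g - 1)), (X - C (a (r, 1)))))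
  else (prymM g a 0, -(prymM g a 1))

/-- `T_g(a)`, the span of the Prym-canonical sections (a realization of `H⁰(C, K_C ⊗ A)`). -/
def Tspace (a : Fin (g - 1) × Fin 2 → ℂ) : Submodule ℂ PP :=
  Submodule.span ℂ (Set.range (prymSection g a))

/-- `H_g(a)`, the span of the canonical sections (a realization of `H⁰(C, K_C)`). -/
def Hspace (a : Fin (g - 1) × Fin 2 → ℂ) : Submodule ℂ PP :=
  Submodule.span ℂ (Set.range (prymCanSection g a))

/-- `t_i` as an element of `T_g(a)`. -/
def tSec (a : Fin (g - 1) × Fin 2 → ℂ) (i : Fin (g - 1)) : Tspace g a :=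
  ⟨prymSection g a i, Submodule.subset_span ⟨i, rfl⟩⟩

/-- `s_j` as an element of `H_g(a)`. -/
def sSec (a : Fin (g - 1) × Fin 2 → ℂ) (j : Fin g) : Hspace g a :=
  ⟨prymCanSection g a j, Submodule.subset_span ⟨j, rfl⟩⟩

/-- An admissible Prym parameter system of genus `g`: all entries nonzero and, for each `j`,
the `a_{1,j}, …, a_{g-1,j}` pairwise distinct. -/
def PrymAdmissible (a : Fin (g - 1) × Fin 2 → ℂ) : Prop :=
  (∀ p, a p ≠ 0) ∧ ∀ j : Fin 2, Function.Injective fun i : Fin (g - 1) => a (i, j)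

/-- `F` is the Koszul map `F_l^a : Λ^l T_g(a) ⊗ H_g(a) → Λ^{l-1} T_g(a) ⊗ (ℂ[t]×ℂ[t])`,
`v_1 ∧ ⋯ ∧ v_l ⊗ s ↦ Σ_m (-1)^m v_1 ∧ ⋯ ∧ v̂_m ∧ ⋯ ∧ v_l ⊗ (v_m · s)`. -/
def IsPrymKoszul (a : Fin (g - 1) × Fin 2 → ℂ) (l : ℕ)
    (F : (⋀[ℂ]^l (Tspace g a)) ⊗[ℂ] (Hspace g a) →ₗ[ℂ]
         (⋀[ℂ]^(l - 1) (Tspace g a)) ⊗[ℂ] PP) : Prop :=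
  ∀ (v : Fin l → Tspace g a) (s : Hspace g a),
    F ((wedgeP ℂ l v) ⊗ₜ[ℂ] s) =
      ∑ m : Fin l, ((-1 : ℂ) ^ ((m : ℕ) + 1)) •
        ((wedgeP ℂ (l - 1) (removeIdx m v)) ⊗ₜ[ℂ] ((v m : PP) * (s : PP)))

/-- The subspace `W` spanned by the `t_I ⊗ s_j` with `j ∉ I`. -/
def Wsub (a : Fin (g - 1) × Fin 2 → ℂ) (l : ℕ) :
    Submodule ℂ ((⋀[ℂ]^l (Tspace g a)) ⊗[ℂ] (Hspace g a)) :=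
  Submodule.span ℂ
    {w | ∃ (I : Fin l → Fin (g - 1)) (j : Fin g), StrictMono I ∧ (∀ m, (I m : ℕ) ≠ (j : ℕ)) ∧
      w = (wedgeP ℂ l fun m => tSec g a (I m)) ⊗ₜ[ℂ] sSec g a j}

/-- The parameter system of genus `g-1` obtained by deleting the index `r`. -/
def prymDelete (a : Fin (g - 1) × Fin 2 → ℂ) (r : Fin (g - 1)) :
    Fin (g - 1 - 1) × Fin 2 → ℂ := fun p =>
  if h : (p.1 : ℕ) < (r : ℕ) then a (⟨p.1, by have := r.2; omega⟩, p.2)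
  else a (⟨(p.1 : ℕ) + 1, by have := p.1.2; omega⟩, p.2)

end Prym

section Canonical

variable (g : ℕ)

/-- An admissible canonical parameter system of genus `g`. -/
def CanAdmissible (a : Fin g × Fin 2 → ℂ) : Prop :=
  ∀ j : Fin 2, Function.Injective fun i : Fin g => a (i, j)

/-- The canonical section `s_i = (M_1(t)/(t - a_{i,1}), -M_2(t)/(t - a_{i,2}))`. -/
def canSection (a : Fin g × Fin 2 → ℂ) (i : Fin g) : PP :=
  (∏ r ∈ Finset.univ.erase i, (X - C (a (r, 0))),
   -∏ r ∈ Finset.univ.erase i, (X - C (a (r, 1))))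

/-- `H_g(a)`, the span of the canonical sections (a realization of `H⁰(C, K_C)`). -/
def Hc (a : Fin g × Fin 2 → ℂ) : Submodule ℂ PP :=
  Submodule.span ℂ (Set.range (canSection g a))

/-- `s_i` as an element of `H_g(a)`. -/
def cSec (a : Fin g × Fin 2 → ℂ) (i : Fin g) : Hc g a :=
  ⟨canSection g a i, Submodule.subset_span ⟨i, rfl⟩⟩

/-- `F` is the Koszul map `F_l^a : Λ^l H_g(a) ⊗ H_g(a) → Λ^{l-1} H_g(a) ⊗ (ℂ[t]×ℂ[t])`. -/
def IsCanKoszul (a : Fin g × Fin 2 → ℂ) (l : ℕ)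
    (F : (⋀[ℂ]^l (Hc g a)) ⊗[ℂ] (Hc g a) →ₗ[ℂ]
         (⋀[ℂ]^(l - 1) (Hc g a)) ⊗[ℂ] PP) : Prop :=
  ∀ (v : Fin l → Hc g a) (s : Hc g a),
    F ((wedgeP ℂ l v) ⊗ₜ[ℂ] s) =
      ∑ m : Fin l, ((-1 : ℂ) ^ ((m : ℕ) + 1)) •
        ((wedgeP ℂ (l - 1) (removeIdx m v)) ⊗ₜ[ℂ] ((v m : PP) * (s : PP)))

/-- `V_{g,l}(a)`: the span of the `s_I ⊗ s_j` with `j ≥ i_1`. -/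
def Vsub (a : Fin g × Fin 2 → ℂ) (l : ℕ) :
    Submodule ℂ ((⋀[ℂ]^l (Hc g a)) ⊗[ℂ] (Hc g a)) :=
  Submodule.span ℂ
    {w | ∃ (I : Fin l → Fin g) (j : Fin g), StrictMono I ∧ (∀ m : Fin l, (m : ℕ) = 0 → I m ≤ j) ∧
      w = (wedgeP ℂ l fun m => cSec g a (I m)) ⊗ₜ[ℂ] cSec g a j}

/-- The subspace `W ⊆ V_{g,l}(a)` spanned by the `s_I ⊗ s_j` with `j ∉ I` and `j > i_1`. -/
def WsubC (a : Fin g × Fin 2 → ℂ) (l : ℕ) :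
    Submodule ℂ ((⋀[ℂ]^l (Hc g a)) ⊗[ℂ] (Hc g a)) :=
  Submodule.span ℂ
    {w | ∃ (I : Fin l → Fin g) (j : Fin g), StrictMono I ∧ (∀ m, I m ≠ j) ∧
      (∀ m : Fin l, (m : ℕ) = 0 → I m < j) ∧
      w = (wedgeP ℂ l fun m => cSec g a (I m)) ⊗ₜ[ℂ] cSec g a j}

/-- The canonical parameter system of genus `g-1` obtained by deleting the index `r`. -/
def canDelete (a : Fin g × Fin 2 → ℂ) (r : Fin g) : Fin (g - 1) × Fin 2 → ℂ := fun p =>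
  if h : (p.1 : ℕ) < (r : ℕ) then a (⟨p.1, by have := r.2; omega⟩, p.2)
  else a (⟨(p.1 : ℕ) + 1, by have := p.1.2; omega⟩, p.2)

end Canonical

/-!
The canonical sections form a basis of `H_g(a)` (the first component of `s_i` vanishes at
`a_{j,1}` exactly when `i ≠ j`), so the tensors `s_S ⊗ s_j` with `#S = l` form a basis of
`Λ^l H_g(a) ⊗ H_g(a)`. Fix `j ∈ S`, evaluate the first component of `F` at `a_{j,1}` and take
the coefficient of `s_{S ∖ j}`: this functional kills every basis tensor `s_{S'} ⊗ s_{j'}`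
except `s_S ⊗ s_j`, on which it is `±s_j(a_{j,1})² ≠ 0`. Hence an element of `ker F` has no
component along any `s_S ⊗ s_j` with `j ∈ S`. A generator `s_I ⊗ s_j` of `V_{g,l}(a)` either
has `j ∈ I` or already lies in `W`, so an element of `V_{g,l}(a) ∩ ker F` lies in `W`;
injectivity on `V_{g,l}(a)` and on `W` are then equivalent because `W ⊆ V_{g,l}(a)`.
-/

section RemoveIdx

variable {α : Type*} {l : ℕ}

lemma removeIdx_comp {β : Type*} (m : Fin l) (f : α → β) (v : Fin l → α) :
    removeIdx m (fun k => f (v k)) = fun k => f (removeIdx m v k) := by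
  funext k
  unfold removeIdx
  split <;> rfl

lemma strictMono_removeIdx [Preorder α] {v : Fin l → α} (hv : StrictMono v) (m : Fin l) :
    StrictMono (removeIdx m v) := by
  intro p q hpq
  have hpq' : (p : ℕ) < (q : ℕ) := hpq
  unfold removeIdx
  split_ifs <;> apply hv <;> exact Fin.mk_lt_mk.mpr (by omega)

lemma insert_range_removeIdx (m : Fin l) (v : Fin l → α) :
    insert (v m) (Set.range (removeIdx m v)) = Set.range v := by
  refine subset_antisymm (Set.insert_subset (Set.mem_range_self m) ?_) ?_
  · rintro _ ⟨k, rfl⟩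
    unfold removeIdx
    split <;> exact Set.mem_range_self _
  · rintro _ ⟨k, rfl⟩
    rcases lt_trichotomy (k : ℕ) m with h | h | h
    · refine Or.inr ⟨⟨k, by omega⟩, ?_⟩
      simp [removeIdx, h]
    · exact Or.inl (congrArg v (Fin.ext h))
    · refine Or.inr ⟨⟨k - 1, by omega⟩, ?_⟩
      simp only [removeIdx, show ¬ (k - 1 < (m : ℕ)) by omega, dite_false]
      congr
      omega

lemma StrictMono.eq_of_removeIdx_eq [LinearOrder α] {v w : Fin l → α} (hv : StrictMono v)
    (hw : StrictMono w) {m n : Fin l} (hvw : v m = w n)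
    (h : removeIdx m v = removeIdx n w) : v = w := by
  refine (hv.range_inj hw).mp ?_
  rw [← insert_range_removeIdx m v, ← insert_range_removeIdx n w, hvw, h]

end RemoveIdx

section ExteriorPowerBasis

open Set.powersetCard

variable {R M ι : Type*} [CommRing R] [AddCommGroup M] [Module R M] [LinearOrder ι] {n : ℕ}

lemma mem_ofFinEmbEquiv_ofStrictMono {J : Fin n → ι} (hJ : StrictMono J) {i : ι} :
    i ∈ ofFinEmbEquiv (OrderEmbedding.ofStrictMono J hJ) ↔ ∃ k, J k = i :=
  mem_ofFinEmbEquiv_iff_mem_range _ i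

lemma Module.Basis.wedgeP_comp_eq_exteriorPower (b : Module.Basis ι R M) {J : Fin n → ι}
    (hJ : StrictMono J) :
    wedgeP R n (fun k => b (J k)) =
      b.exteriorPower n (ofFinEmbEquiv (OrderEmbedding.ofStrictMono J hJ)) := by
  rw [exteriorPower.basis_apply, exteriorPower.ιMulti_family, Equiv.symm_apply_apply]
  rfl

lemma Module.Basis.exteriorPower_coord_wedgeP [DecidableEq ι] (b : Module.Basis ι R M)
    {J J₀ : Fin n → ι} (hJ : StrictMono J) (hJ₀ : StrictMono J₀) :
    (b.exteriorPower n).coord (ofFinEmbEquiv (OrderEmbedding.ofStrictMono J₀ hJ₀))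
      (wedgeP R n fun k => b (J k)) = if J = J₀ then 1 else 0 := by
  rw [b.wedgeP_comp_eq_exteriorPower hJ, Module.Basis.coord_apply, Module.Basis.repr_self,
    Finsupp.single_apply]
  refine if_congr ?_ rfl rfl
  rw [ofFinEmbEquiv.injective.eq_iff, ← DFunLike.coe_fn_eq]
  rfl

end ExteriorPowerBasis

section CanonicalBasis

variable {g : ℕ} {a : Fin g × Fin 2 → ℂ}

def evalFst (x : ℂ) : PP →ₗ[ℂ] ℂ :=
  Polynomial.leval x ∘ₗ LinearMap.fst ℂ (Polynomial ℂ) (Polynomial ℂ)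

lemma evalFst_apply (x : ℂ) (p : PP) : evalFst x p = p.1.eval x := rfl

lemma evalFst_mul (x : ℂ) (p q : PP) : evalFst x (p * q) = evalFst x p * evalFst x q := by
  simp only [evalFst_apply, Prod.fst_mul, eval_mul]

lemma evalFst_canSection_of_ne {i j : Fin g} (h : i ≠ j) :
    evalFst (a (j, 0)) (canSection g a i) = 0 := by
  rw [evalFst_apply, canSection, eval_prod]
  exact Finset.prod_eq_zero (Finset.mem_erase.mpr ⟨h.symm, Finset.mem_univ j⟩) (by simp)

lemma evalFst_canSection_self_ne_zero (ha : CanAdmissible g a) (i : Fin g) :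
    evalFst (a (i, 0)) (canSection g a i) ≠ 0 := by
  rw [evalFst_apply, canSection, eval_prod, Finset.prod_ne_zero_iff]
  intro r hr
  rw [eval_sub, eval_X, eval_C, sub_ne_zero]
  exact fun h => (Finset.mem_erase.mp hr).1 (ha 0 h.symm)

lemma linearIndependent_canSection (ha : CanAdmissible g a) :
    LinearIndependent ℂ (canSection g a) :=
  .of_pairwise_dual_eq_zero_one _
    (fun i => (evalFst (a (i, 0)) (canSection g a i))⁻¹ • evalFst (a (i, 0)))
    (fun i j hij => by
      simp only [LinearMap.smul_apply, evalFst_canSection_of_ne hij.symm, smul_zero])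
    (fun i => inv_mul_cancel₀ (evalFst_canSection_self_ne_zero ha i))

def canBasis (ha : CanAdmissible g a) : Module.Basis (Fin g) ℂ (Hc g a) :=
  .span (linearIndependent_canSection ha)

lemma coe_canBasis (ha : CanAdmissible g a) : ⇑(canBasis ha) = cSec g a :=
  funext fun i => Subtype.ext (Module.Basis.coe_span_apply _ i)

def koszulBasis (ha : CanAdmissible g a) (l : ℕ) :
    Module.Basis (Set.powersetCard (Fin g) l × Fin g) ℂ
      ((⋀[ℂ]^l (Hc g a)) ⊗[ℂ] Hc g a) :=
  ((canBasis ha).exteriorPower l).tensorProduct (canBasis ha)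

lemma koszulBasis_apply (ha : CanAdmissible g a) {l : ℕ} (S : Set.powersetCard (Fin g) l)
    (j : Fin g) :
    koszulBasis ha l (S, j) =
      (wedgeP ℂ l fun m => cSec g a (Set.powersetCard.ofFinEmbEquiv.symm S m)) ⊗ₜ[ℂ]
        cSec g a j := by
  rw [koszulBasis, Module.Basis.tensorProduct_apply, exteriorPower.basis_apply, coe_canBasis]
  rfl

lemma wedgeP_tmul_eq_koszulBasis (ha : CanAdmissible g a) {l : ℕ} {I : Fin l → Fin g}
    (hI : StrictMono I) (j : Fin g) :
    (wedgeP ℂ l fun m => cSec g a (I m)) ⊗ₜ[ℂ] cSec g a j =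
      koszulBasis ha l
        (Set.powersetCard.ofFinEmbEquiv (OrderEmbedding.ofStrictMono I hI), j) := by
  rw [koszulBasis, Module.Basis.tensorProduct_apply, ← Module.Basis.wedgeP_comp_eq_exteriorPower,
    coe_canBasis]

end CanonicalBasis

lemma Module.Basis.repr_eq_zero_of_dual {R M ι : Type*} [CommSemiring R] [NoZeroDivisors R]
    [AddCommMonoid M] [Module R M] (b : Module.Basis ι R M) (f : M →ₗ[R] R) {i : ι}
    (hi : f (b i) ≠ 0) (hf : ∀ k ≠ i, f (b k) = 0) {v : M} (hv : f v = 0) :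
    b.repr v i = 0 := by
  have hf_eq : f = f (b i) • b.coord i := b.ext fun k => by
    by_cases hk : k = i
    · simp [hk]
    · simp [hf k hk, Ne.symm hk]
  rw [hf_eq, LinearMap.smul_apply, Module.Basis.coord_apply, smul_eq_mul] at hv
  exact (mul_eq_zero.mp hv).resolve_left hi

section KoszulEval

variable {g l : ℕ} {a : Fin g × Fin 2 → ℂ}
  {F : (⋀[ℂ]^l (Hc g a)) ⊗[ℂ] (Hc g a) →ₗ[ℂ] (⋀[ℂ]^(l - 1) (Hc g a)) ⊗[ℂ] PP}

variable (F) in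
def koszulEval (j : Fin g) :
    (⋀[ℂ]^l (Hc g a)) ⊗[ℂ] (Hc g a) →ₗ[ℂ] ⋀[ℂ]^(l - 1) (Hc g a) :=
  (TensorProduct.rid ℂ _).toLinearMap ∘ₗ (evalFst (a (j, 0))).lTensor _ ∘ₗ F

lemma IsCanKoszul.koszulEval_tmul (hF : IsCanKoszul g a l F) (j : Fin g)
    (v : Fin l → Hc g a) (s : Hc g a) :
    koszulEval F j (wedgeP ℂ l v ⊗ₜ[ℂ] s) =
      ∑ m : Fin l, ((-1 : ℂ) ^ ((m : ℕ) + 1) * evalFst (a (j, 0)) ((v m : PP) * (s : PP))) •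
        wedgeP ℂ (l - 1) (removeIdx m v) := by
  simp only [koszulEval, LinearMap.comp_apply, hF v s, map_sum, map_smul,
    LinearMap.lTensor_tmul, LinearEquiv.coe_toLinearMap, TensorProduct.rid_tmul, smul_smul]

lemma IsCanKoszul.koszulEval_eq_zero (hF : IsCanKoszul g a l F) {I : Fin l → Fin g}
    {j j' : Fin g} (h : ∀ m, I m = j → j' ≠ j) :
    koszulEval F j ((wedgeP ℂ l fun m => cSec g a (I m)) ⊗ₜ[ℂ] cSec g a j') = 0 := by
  rw [hF.koszulEval_tmul]
  refine Finset.sum_eq_zero fun m _ => ?_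
  rw [evalFst_mul]
  by_cases hm : I m = j
  · simp [cSec, evalFst_canSection_of_ne (h m hm)]
  · simp [cSec, evalFst_canSection_of_ne hm]

lemma IsCanKoszul.koszulEval_self (hF : IsCanKoszul g a l F) {I : Fin l → Fin g}
    (hI : Function.Injective I) {m₀ : Fin l} {j : Fin g} (hm₀ : I m₀ = j) :
    koszulEval F j ((wedgeP ℂ l fun m => cSec g a (I m)) ⊗ₜ[ℂ] cSec g a j) =
      ((-1 : ℂ) ^ ((m₀ : ℕ) + 1) * evalFst (a (j, 0)) (canSection g a j) ^ 2) •
        wedgeP ℂ (l - 1) (fun k => cSec g a (removeIdx m₀ I k)) := by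
  rw [hF.koszulEval_tmul, Finset.sum_eq_single m₀, removeIdx_comp, evalFst_mul, hm₀, sq]
  · rfl
  · intro m _ hm
    rw [evalFst_mul, cSec, evalFst_canSection_of_ne fun h => hm (hI (h.trans hm₀.symm))]
    simp
  · exact fun h => absurd (Finset.mem_univ m₀) h

end KoszulEval

section KoszulKernel

open Set.powersetCard

variable {g l : ℕ} {a : Fin g × Fin 2 → ℂ}
  {F : (⋀[ℂ]^l (Hc g a)) ⊗[ℂ] (Hc g a) →ₗ[ℂ] (⋀[ℂ]^(l - 1) (Hc g a)) ⊗[ℂ] PP}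

theorem ker_le_span_koszulBasis_offDiag (ha : CanAdmissible g a) (hF : IsCanKoszul g a l F) :
    LinearMap.ker F ≤ Submodule.span ℂ (koszulBasis ha l '' {p | p.2 ∉ p.1}) := by
  intro v hv
  rw [Module.Basis.mem_span_image]
  rintro ⟨S, j⟩ hp (hj : j ∈ S)
  refine Finsupp.mem_support_iff.mp hp ?_
  set I := ofFinEmbEquiv.symm S
  obtain ⟨m₀, hm₀⟩ := (mem_range_ofFinEmbEquiv_symm_iff_mem S j).mpr hj
  have hJ₀ := strictMono_removeIdx I.strictMono m₀
  set coeff := ((canBasis ha).exteriorPower (l - 1)).coord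
    (ofFinEmbEquiv (OrderEmbedding.ofStrictMono _ hJ₀)) ∘ₗ koszulEval F j
  have hcoeff : ∀ (S' : Set.powersetCard (Fin g) l) (m : Fin l), ofFinEmbEquiv.symm S' m = j →
      coeff (koszulBasis ha l (S', j)) = (-1 : ℂ) ^ ((m : ℕ) + 1) *
        evalFst (a (j, 0)) (canSection g a j) ^ 2 * if S' = S then 1 else 0 := by
    intro S' m hm
    have hI' := (ofFinEmbEquiv.symm S').strictMono
    rw [LinearMap.comp_apply, koszulBasis_apply, hF.koszulEval_self hI'.injective hm, map_smul,
      ← coe_canBasis ha, Module.Basis.exteriorPower_coord_wedgeP _ (strictMono_removeIdx hI' m),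
      smul_eq_mul]
    congr 1
    refine if_congr ⟨fun h => ?_, ?_⟩ rfl rfl
    · exact ofFinEmbEquiv.symm.injective (DFunLike.coe_injective
        (hI'.eq_of_removeIdx_eq I.strictMono (hm.trans hm₀.symm) h))
    · rintro rfl
      rw [I.injective (hm.trans hm₀.symm)]
  refine Module.Basis.repr_eq_zero_of_dual _ coeff ?_ ?_
    (by simp [coeff, koszulEval, LinearMap.mem_ker.mp hv])
  · rw [hcoeff S m₀ hm₀, if_pos rfl, mul_one]
    exact mul_ne_zero (pow_ne_zero _ (neg_ne_zero.mpr one_ne_zero))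
      (pow_ne_zero _ (evalFst_canSection_self_ne_zero ha j))
  · rintro ⟨S', j'⟩ hne
    by_cases hjj' : j' = j ∧ j ∈ S'
    · obtain ⟨rfl, hjS'⟩ := hjj'
      obtain ⟨m, hm⟩ := (mem_range_ofFinEmbEquiv_symm_iff_mem S' j').mpr hjS'
      rw [hcoeff S' m hm, if_neg fun h => hne (by rw [h]), mul_zero]
    · rw [LinearMap.comp_apply, koszulBasis_apply, hF.koszulEval_eq_zero, map_zero]
      refine fun m hm hj' => hjj' ⟨hj', ?_⟩
      exact (mem_range_ofFinEmbEquiv_symm_iff_mem S' j).mp ⟨m, hm⟩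

end KoszulKernel

section Decomposition

variable {g : ℕ} {a : Fin g × Fin 2 → ℂ} {l : ℕ}

lemma WsubC_le_span_koszulBasis_offDiag (ha : CanAdmissible g a) :
    WsubC g a l ≤ Submodule.span ℂ (koszulBasis ha l '' {p | p.2 ∉ p.1}) := by
  refine Submodule.span_le.mpr ?_
  rintro _ ⟨I, j, hI, hIj, -, rfl⟩
  rw [wedgeP_tmul_eq_koszulBasis ha hI]
  refine Submodule.subset_span ⟨_, ?_, rfl⟩
  rintro h
  obtain ⟨m, hm⟩ := (mem_ofFinEmbEquiv_ofStrictMono hI).mp h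
  exact hIj m hm

lemma Vsub_le_WsubC_sup_span_koszulBasis_diag (ha : CanAdmissible g a) :
    Vsub g a l ≤ WsubC g a l ⊔ Submodule.span ℂ (koszulBasis ha l '' {p | p.2 ∈ p.1}) := by
  refine Submodule.span_le.mpr ?_
  rintro _ ⟨I, j, hI, hle, rfl⟩
  by_cases hj : ∃ m, I m = j
  · rw [wedgeP_tmul_eq_koszulBasis ha hI]
    exact Submodule.mem_sup_right (Submodule.subset_span
      ⟨_, (mem_ofFinEmbEquiv_ofStrictMono hI).mpr hj, rfl⟩)
  · push Not at hj
    exact Submodule.mem_sup_left (Submodule.subset_span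
      ⟨I, j, hI, hj, fun m hm => (hle m hm).lt_of_ne (hj m), rfl⟩)

lemma WsubC_le_Vsub : WsubC g a l ≤ Vsub g a l :=
  Submodule.span_le.mpr fun _ ⟨I, j, hI, _, hlt, hw⟩ =>
    Submodule.subset_span ⟨I, j, hI, fun m hm => (hlt m hm).le, hw⟩

end Decomposition

theorem mem_WsubC_of_mem_Vsub_of_koszul_eq_zero {g l : ℕ} {a : Fin g × Fin 2 → ℂ}
    (ha : CanAdmissible g a)
    {F : (⋀[ℂ]^l (Hc g a)) ⊗[ℂ] (Hc g a) →ₗ[ℂ]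
      (⋀[ℂ]^(l - 1) (Hc g a)) ⊗[ℂ] PP}
    (hF : IsCanKoszul g a l F) {v : (⋀[ℂ]^l (Hc g a)) ⊗[ℂ] (Hc g a)} (hv : v ∈ Vsub g a l)
    (hFv : F v = 0) : v ∈ WsubC g a l := by
  obtain ⟨w, hw, d, hd, rfl⟩ :=
    Submodule.mem_sup.mp (Vsub_le_WsubC_sup_span_koszulBasis_diag ha hv)
  -- The explicit `@`: elaboration does not unify the `AddCommMonoid` structure of `⊗` with the
  -- one underlying its `AddCommGroup` structure.
  have hd_off : d ∈ Submodule.span ℂ (koszulBasis ha l '' {p | p.2 ∉ p.1}) :=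
    (@Submodule.add_mem_iff_right ℂ _ _ _ _ _ w d
      (WsubC_le_span_koszulBasis_offDiag ha hw)).mp (ker_le_span_koszulBasis_offDiag ha hF hFv)
  have hd0 : d = 0 := Submodule.disjoint_def.mp
    ((koszulBasis ha l).linearIndependent.disjoint_span_image (s := {p | p.2 ∈ p.1})
      (t := {p | p.2 ∉ p.1}) (Set.disjoint_left.mpr fun _ h h' => h' h)) d hd hd_off
  rwa [hd0, add_zero]

theorem statement7_general (g : ℕ) (a : Fin g × Fin 2 → ℂ) (ha : CanAdmissible g a)
    (l : ℕ)
    (F : (⋀[ℂ]^l (Hc g a)) ⊗[ℂ] (Hc g a) →ₗ[ℂ] (⋀[ℂ]^(l - 1) (Hc g a)) ⊗[ℂ] PP)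
    (hF : IsCanKoszul g a l F) :
    (∀ v ∈ Vsub g a l, F v = 0 → v ∈ WsubC g a l) ∧
    (Set.InjOn F (Vsub g a l : Set _) ↔ Set.InjOn F (WsubC g a l : Set _)) := by
  have hker : ∀ v ∈ Vsub g a l, F v = 0 → v ∈ WsubC g a l :=
    fun _ hv hFv => mem_WsubC_of_mem_Vsub_of_koszul_eq_zero ha hF hv hFv
  refine ⟨hker, fun hinj => hinj.mono WsubC_le_Vsub, fun hinj x hx y hy hxy => ?_⟩
  have hFxy : F (x - y) = 0 := by rw [map_sub, hxy, sub_self]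
  have hxy_W : x - y ∈ WsubC g a l :=
    hker _ (@Submodule.sub_mem ℂ _ _ _ _ (Vsub g a l) x y hx hy) hFxy
  exact sub_eq_zero.mp (hinj hxy_W (WsubC g a l).zero_mem (by rw [hFxy, map_zero]))

/-- Remark `W_i` for canonical binary curves: the kernel of the restriction
of `F_l^a` to `V_{g,l}(a)` is contained in the span `W` of the `s_I ⊗ s_j` with `j ∉ I` and
`j > i_1`; consequently `F_l^a` is injective on `V_{g,l}(a)` iff it is injective on `W`. -/
theorem statement7 (g : ℕ) (hg : 3 ≤ g) (a : Fin g × Fin 2 → ℂ) (ha : CanAdmissible g a)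
    (l : ℕ) (hl : 1 ≤ l)
    (F : (⋀[ℂ]^l (Hc g a)) ⊗[ℂ] (Hc g a) →ₗ[ℂ] (⋀[ℂ]^(l - 1) (Hc g a)) ⊗[ℂ] PP)
    (hF : IsCanKoszul g a l F) :
    (∀ v ∈ Vsub g a l, F v = 0 → v ∈ WsubC g a l) ∧
    (Set.InjOn F (Vsub g a l : Set _) ↔ Set.InjOn F (WsubC g a l : Set _)) :=
  statement7_general g a ha l F hF
end
end

section
/- Let g ≥ 5, let a be an admissible Prym parameter system of genus g, let 1 ≤ r ≤ g−1, and let a′ be the admissible Prym parameter system of genus g−1 defined by a′_{i,j} = a_{i,j} for i ≤ r−1 and a′_{i,j} = a_{i+1,j} for i ≥ r (j = 1,2). Then componentwise multiplication by (t−a_{r,1}, t−a_{r,2}) maps H_{g−1}(a′) injectively into H_g(a); explicitly, it sends the basis vector s^{a′}_{j′} to s^a_{j′} for j′ ≤ r−1, to s^a_{j′+1} for r ≤ j′ ≤ g−2, and s^{a′}_{g−1} to s^a_g. -/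
open Polynomial TensorProduct

set_option synthInstance.maxHeartbeats 1000000
set_option maxHeartbeats 1000000

noncomputable section

/-!
Deleting the index `r` removes exactly the factor `t - a_{r,j}` from every product defining the
canonical sections, so multiplying by `(t - a_{r,1}, t - a_{r,2})` puts it back; injectivity holds
because `ℂ[t]` is a domain.
-/

def skipIndex {m : ℕ} (r : Fin m) (i : Fin (m - 1)) : Fin m :=
  ⟨if (i : ℕ) < r then i else i + 1, by split_ifs <;> omega⟩

section skipIndex

variable {m : ℕ} (r : Fin m)

lemma skipIndex_injective : Function.Injective (skipIndex r) := by
  intro i j h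
  have := congrArg Fin.val h
  simp only [skipIndex] at this
  ext
  split_ifs at this <;> omega

lemma skipIndex_ne (i : Fin (m - 1)) : skipIndex r i ≠ r := by
  intro h
  have := congrArg Fin.val h
  simp only [skipIndex] at this
  split_ifs at this <;> omega

lemma image_skipIndex : Finset.univ.image (skipIndex r) = Finset.univ.erase r := by
  refine Finset.eq_of_subset_of_card_le ?_ ?_
  · intro s hs
    obtain ⟨i, -, rfl⟩ := Finset.mem_image.1 hs
    exact Finset.mem_erase.2 ⟨skipIndex_ne r i, Finset.mem_univ _⟩
  · rw [Finset.card_erase_of_mem (Finset.mem_univ r),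
      Finset.card_image_of_injective _ (skipIndex_injective r)]
    simp

variable {M : Type*} [CommMonoid M] (f : Fin m → M)

lemma mul_prod_skipIndex : f r * ∏ i, f (skipIndex r i) = ∏ s, f s := by
  rw [← Finset.prod_image (skipIndex_injective r).injOn, image_skipIndex]
  exact Finset.mul_prod_erase _ f (Finset.mem_univ r)

lemma mul_prod_erase_skipIndex (j : Fin (m - 1)) :
    f r * ∏ i ∈ Finset.univ.erase j, f (skipIndex r i) =
      ∏ s ∈ Finset.univ.erase (skipIndex r j), f s := by
  rw [← Finset.prod_image (skipIndex_injective r).injOn,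
    Finset.image_erase (skipIndex_injective r), image_skipIndex, Finset.erase_right_comm]
  exact Finset.mul_prod_erase _ f
    (Finset.mem_erase.2 ⟨(skipIndex_ne r j).symm, Finset.mem_univ r⟩)

end skipIndex

lemma prymDelete_apply (g : ℕ) (a : Fin (g - 1) × Fin 2 → ℂ) (r : Fin (g - 1))
    (i : Fin (g - 1 - 1)) (j : Fin 2) :
    prymDelete g a r (i, j) = a (skipIndex r i, j) := by
  unfold prymDelete skipIndex
  split_ifs <;> rfl

lemma mulPair_injective {q : PP} (h₁ : q.1 ≠ 0) (h₂ : q.2 ≠ 0) :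
    Function.Injective (mulPair q) := fun _ _ h =>
  Prod.ext (mul_left_cancel₀ h₁ (congrArg Prod.fst h)) (mul_left_cancel₀ h₂ (congrArg Prod.snd h))

/-- As `r < g - 1`, skipping `r` in `Fin g` also sends the last index `g - 2` to `g - 1`, which
covers `s^{a'}_{g-1} ↦ s^a_g`. -/
lemma mulPair_prymCanSection_prymDelete (g : ℕ) (a : Fin (g - 1) × Fin 2 → ℂ)
    (r : Fin (g - 1)) (j' : Fin (g - 1)) :
    mulPair (X - C (a (r, 0)), X - C (a (r, 1)))
        (prymCanSection (g - 1) (prymDelete g a r) j') =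
      prymCanSection g a (skipIndex (r.castLE (Nat.sub_le g 1)) j') := by
  have hr := r.2
  simp only [mulPair, LinearMap.mulLeft_apply, prymCanSection, prymM, prymDelete_apply]
  by_cases hj' : (j' : ℕ) < g - 1 - 1
  · have hj : (skipIndex (r.castLE (Nat.sub_le g 1)) j' : ℕ) < g - 1 := by
      simp only [skipIndex, Fin.val_castLE]; split_ifs <;> omega
    have hskip : (⟨_, hj⟩ : Fin (g - 1)) = skipIndex r ⟨j', hj'⟩ := by
      ext; simp [skipIndex]
    rw [dif_pos hj', dif_pos hj, hskip, ← mul_prod_erase_skipIndex r (fun s => X - C (a (s, 0))),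
      ← mul_prod_erase_skipIndex r (fun s => X - C (a (s, 1)))]
    ext1 <;> simp only [Prod.fst_mul, Prod.snd_mul] <;> ring
  · have hj : ¬ (skipIndex (r.castLE (Nat.sub_le g 1)) j' : ℕ) < g - 1 := by
      simp only [skipIndex, Fin.val_castLE]; split_ifs <;> omega
    rw [dif_neg hj', dif_neg hj, ← mul_prod_skipIndex r (fun s => X - C (a (s, 0))),
      ← mul_prod_skipIndex r (fun s => X - C (a (s, 1)))]
    ext1 <;> simp only [Prod.fst_mul, Prod.snd_mul, mul_neg]

theorem statement11_general (g : ℕ) (a : Fin (g - 1) × Fin 2 → ℂ) (r : Fin (g - 1)) :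
    (∀ x ∈ Hspace (g - 1) (prymDelete g a r),
      mulPair (X - C (a (r, 0)), X - C (a (r, 1))) x ∈ Hspace g a) ∧
    Set.InjOn (mulPair (X - C (a (r, 0)), X - C (a (r, 1))))
      (Hspace (g - 1) (prymDelete g a r) : Set PP) ∧
    ∀ (j' : Fin (g - 1)) (j : Fin g),
      ((j' : ℕ) < (r : ℕ) → (j : ℕ) = (j' : ℕ)) →
      ((r : ℕ) ≤ (j' : ℕ) → (j' : ℕ) < g - 2 → (j : ℕ) = (j' : ℕ) + 1) →
      ((j' : ℕ) = g - 2 → (j : ℕ) = g - 1) →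
      mulPair (X - C (a (r, 0)), X - C (a (r, 1)))
          (prymCanSection (g - 1) (prymDelete g a r) j') = prymCanSection g a j := by
  refine ⟨fun x hx => ?_, (mulPair_injective (X_sub_C_ne_zero _) (X_sub_C_ne_zero _)).injOn,
    fun j' j h₁ h₂ h₃ => ?_⟩
  · refine (Submodule.map_span_le _ _ _).2 ?_ (Submodule.mem_map_of_mem hx)
    rintro _ ⟨j', rfl⟩
    rw [mulPair_prymCanSection_prymDelete]
    exact Submodule.subset_span ⟨_, rfl⟩
  · have hj : j = skipIndex (r.castLE (Nat.sub_le g 1)) j' := by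
      have := j'.2
      ext
      simp only [skipIndex, Fin.val_castLE]
      split_ifs <;> omega
    rw [hj, mulPair_prymCanSection_prymDelete]

/-- componentwise multiplication by `(t - a_{r,1}, t - a_{r,2})` maps
`H_{g-1}(a')` injectively into `H_g(a)`, sending `s^{a'}_{j'}` to `s^a_{j'}` for `j' ≤ r-1`,
to `s^a_{j'+1}` for `r ≤ j' ≤ g-2`, and `s^{a'}_{g-1}` to `s^a_g` (all `1`-based; the target
index `j` is encoded by the hypotheses). -/
theorem statement11 (g : ℕ) (hg : 5 ≤ g) (a : Fin (g - 1) × Fin 2 → ℂ)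
    (ha : PrymAdmissible g a) (r : Fin (g - 1)) :
    (∀ x ∈ Hspace (g - 1) (prymDelete g a r),
      mulPair (X - C (a (r, 0)), X - C (a (r, 1))) x ∈ Hspace g a) ∧
    Set.InjOn (mulPair (X - C (a (r, 0)), X - C (a (r, 1))))
      (Hspace (g - 1) (prymDelete g a r) : Set PP) ∧
    ∀ (j' : Fin (g - 1)) (j : Fin g),
      ((j' : ℕ) < (r : ℕ) → (j : ℕ) = (j' : ℕ)) →
      ((r : ℕ) ≤ (j' : ℕ) → (j' : ℕ) < g - 2 → (j : ℕ) = (j' : ℕ) + 1) →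
      ((j' : ℕ) = g - 2 → (j : ℕ) = g - 1) →
      mulPair (X - C (a (r, 0)), X - C (a (r, 1)))
          (prymCanSection (g - 1) (prymDelete g a r) j') = prymCanSection g a j :=
  statement11_general g a r
end
end
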